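/- For every total switching rate r > 0 and every solution (v₀, v₁) of the insect-respiration BVP with rates α = ρr, β = (1−ρ)r, the steady-state mean oxygen flux F = D·(v₀'(0) + v₁'(0)) satisfies the strict bounds ρ·D·c/L < F < D·c/L. That is, the flux under stochastic gating always lies strictly between the time-averaged flux ρ·Dc/L of the two static problems and the flux Dc/L of the always-open (pure Dirichlet) problem. -/

import Mathlib

/-!
Adding the two equations gives `(v₀ + v₁)'' = 0`, so `v₀ + v₁ = F x / D`. Substituting this into
the equation for `v₁`, the function `ψ = v₁ - (1 - ρ) (F / D) x` solves `ψ'' = k² ψ` with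
`k² = r / D`, `ψ(0) = 0` and `ψ'(L) = -(1 - ρ) F / D`, hence `ψ(L) = ψ'(L) tanh(kL) / k`. Reading
off `v₀(L) = ρ c` then gives `F = ρ D c / ℓ` with the effective length
`ℓ = ρ L + (1 - ρ) tanh(kL) / k`, and `ρ L < ℓ < L` because `0 < tanh y < y` for `y > 0`.
-/

open Set Real

theorem ContDiffOn.hasDerivAt_and_hasDerivAt_deriv {f : ℝ → ℝ} {s : Set ℝ}
    (hf : ContDiffOn ℝ 2 f s) (hs : IsOpen s) {x : ℝ} (hx : x ∈ s) :
    HasDerivAt f (deriv f x) x ∧ HasDerivAt (deriv f) (deriv (deriv f) x) x :=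
  ⟨((hf.differentiableOn (by norm_num)).differentiableAt (hs.mem_nhds hx)).hasDerivAt,
    (((hf.deriv_of_isOpen (m := 1) hs (by norm_num)).differentiableOn (by norm_num))
      |>.differentiableAt (hs.mem_nhds hx)).hasDerivAt⟩

theorem eq_left_of_hasDerivAt_zero {f : ℝ → ℝ} {a b : ℝ}
    (hf : ∀ x ∈ Icc a b, HasDerivAt f 0 x) : ∀ x ∈ Icc a b, f x = f a :=
  constant_of_has_deriv_right_zero (fun x hx => (hf x hx).continuousAt.continuousWithinAt)
    fun x hx => (hf x (Ico_subset_Icc_self hx)).hasDerivWithinAt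

theorem eq_add_mul_of_hasDerivAt_of_hasDerivAt_zero {f f' : ℝ → ℝ} {a b : ℝ}
    (hf : ∀ x ∈ Icc a b, HasDerivAt f (f' x) x) (hf' : ∀ x ∈ Icc a b, HasDerivAt f' 0 x) :
    ∀ x ∈ Icc a b, f x = f a + f' a * (x - a) := by
  have hslope := eq_left_of_hasDerivAt_zero hf'
  have hline : ∀ x ∈ Icc a b, HasDerivAt (fun y => f y - f' a * (y - a)) 0 x := fun x hx => by
    refine ((hf x hx).sub ((hasDerivAt_id' x).sub_const a |>.const_mul (f' a))).congr_deriv ?_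
    rw [hslope x hx]
    ring
  intro x hx
  have := eq_left_of_hasDerivAt_zero hline x hx
  simp only [sub_self, mul_zero, sub_zero] at this
  linarith

/-- The Wronskian `ψ' sinh(k·) - k cosh(k·) ψ` of `ψ` and `sinh(k·)`, both solutions of
`u'' = k² u`, is constant and vanishes at `0`. -/
theorem mul_sinh_eq_mul_cosh_mul_of_hasDerivAt_sq_mul {ψ ψ' : ℝ → ℝ} {k L : ℝ}
    (hψ : ∀ x ∈ Icc 0 L, HasDerivAt ψ (ψ' x) x)
    (hψ' : ∀ x ∈ Icc 0 L, HasDerivAt ψ' (k ^ 2 * ψ x) x) (h0 : ψ 0 = 0) :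
    ∀ x ∈ Icc 0 L, ψ' x * sinh (k * x) = k * cosh (k * x) * ψ x := by
  have hkx : ∀ x : ℝ, HasDerivAt (fun y => k * y) k x := fun x => by
    simpa using (hasDerivAt_id x).const_mul k
  have hW : ∀ x ∈ Icc 0 L,
      HasDerivAt (fun y => ψ' y * sinh (k * y) - k * cosh (k * y) * ψ y) 0 x := fun x hx => by
    refine (((hψ' x hx).mul (hkx x).sinh).sub
      (((hkx x).cosh.const_mul k).mul (hψ x hx))).congr_deriv ?_
    ring
  intro x hx
  have := eq_left_of_hasDerivAt_zero hW x hx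
  simp only [mul_zero, sinh_zero, cosh_zero, h0, sub_zero] at this
  linarith

theorem Real.sinh_lt_mul_cosh {y : ℝ} (hy : 0 < y) : sinh y < y * cosh y := by
  have hmono : StrictMonoOn (fun x : ℝ => x * cosh x - sinh x) (Ici 0) := by
    refine strictMonoOn_of_deriv_pos (convex_Ici _) (by fun_prop) fun x hx => ?_
    rw [interior_Ici, mem_Ioi] at hx
    have hd : HasDerivAt (fun x : ℝ => x * cosh x - sinh x) (x * sinh x) x := by
      refine (((hasDerivAt_id' x).mul (hasDerivAt_cosh x)).sub (hasDerivAt_sinh x)).congr_deriv ?_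
      ring
    rw [hd.deriv]
    exact mul_pos hx (sinh_pos_iff.mpr hx)
  simpa using hmono self_mem_Ici (mem_Ici.mpr hy.le) hy

theorem sinh_div_mul_cosh_mem_Ioo {k L : ℝ} (hk : 0 < k) (hL : 0 < L) :
    sinh (k * L) / (k * cosh (k * L)) ∈ Ioo 0 L := by
  have hden : 0 < k * cosh (k * L) := mul_pos hk (cosh_pos _)
  refine ⟨div_pos (sinh_pos_iff.mpr (mul_pos hk hL)) hden, ?_⟩
  rw [div_lt_iff₀ hden]
  linarith [sinh_lt_mul_cosh (mul_pos hk hL)]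

theorem mul_div_mem_Ioo_of_mem_Ioo_mul {ρ K L ℓ : ℝ} (hρ : 0 < ρ) (hK : 0 < K) (hL : 0 < L)
    (hℓ : ℓ ∈ Ioo (ρ * L) L) : ρ * K / ℓ ∈ Ioo (ρ * K / L) (K / L) := by
  obtain ⟨hlo, hhi⟩ := hℓ
  have hρL : 0 < ρ * L := mul_pos hρ hL
  constructor
  · exact div_lt_div_of_pos_left (mul_pos hρ hK) (hρL.trans hlo) hhi
  · calc ρ * K / ℓ < ρ * K / (ρ * L) := div_lt_div_of_pos_left (mul_pos hρ hK) hρL hlo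
      _ = K / L := mul_div_mul_left K L hρ.ne'

/-- For any switching rate `r > 0`, the steady-state mean oxygen flux
`F = D·(v₀'(0) + v₁'(0))` of the insect-respiration BVP at rate `r` satisfies
`ρ·D·c/L < F < D·c/L`. -/
theorem insect_flux_bounds
    (L D c ρ : ℝ) (hL : 0 < L) (hD : 0 < D) (hc : 0 < c) (hρ : ρ ∈ Set.Ioo (0:ℝ) 1)
    (r : ℝ) (hr : 0 < r) (α β : ℝ) (hα : α = ρ * r) (hβ : β = (1 - ρ) * r)
    (v₀ v₁ : ℝ → ℝ) (a b : ℝ) (ha : a < 0) (hb : L < b)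
    (hreg0 : ContDiffOn ℝ 2 v₀ (Set.Ioo a b))
    (hreg1 : ContDiffOn ℝ 2 v₁ (Set.Ioo a b))
    (hode0 : ∀ x ∈ Set.Icc (0:ℝ) L, D * deriv (deriv v₀) x = β * v₀ x - α * v₁ x)
    (hode1 : ∀ x ∈ Set.Icc (0:ℝ) L, D * deriv (deriv v₁) x = α * v₁ x - β * v₀ x)
    (hbc0 : v₀ 0 = 0) (hbc1 : v₁ 0 = 0)
    (hbc2 : deriv v₁ L = 0) (hbc3 : v₀ L = ρ * c) :
    ρ * D * c / L < D * (deriv v₀ 0 + deriv v₁ 0) ∧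
    D * (deriv v₀ 0 + deriv v₁ 0) < D * c / L := by
  obtain ⟨hρ0, hρ1⟩ := hρ
  have hsub : Icc 0 L ⊆ Ioo a b := fun x hx => ⟨ha.trans_le hx.1, hx.2.trans_lt hb⟩
  have hv₀ := fun x (hx : x ∈ Icc 0 L) =>
    hreg0.hasDerivAt_and_hasDerivAt_deriv isOpen_Ioo (hsub hx)
  have hv₁ := fun x (hx : x ∈ Icc 0 L) =>
    hreg1.hasDerivAt_and_hasDerivAt_deriv isOpen_Ioo (hsub hx)
  have hL_mem : L ∈ Icc 0 L := right_mem_Icc.mpr hL.le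
  set m := deriv v₀ 0 + deriv v₁ 0
  have hsum : ∀ x ∈ Icc 0 L, v₀ x + v₁ x = m * x := fun x hx => by
    have hsum'' : ∀ y ∈ Icc 0 L, HasDerivAt (fun y => deriv v₀ y + deriv v₁ y) 0 y :=
      fun y hy => ((hv₀ y hy).2.add (hv₁ y hy).2).congr_deriv <|
        mul_left_cancel₀ hD.ne' (by linear_combination hode0 y hy + hode1 y hy)
    simpa [hbc0, hbc1] using eq_add_mul_of_hasDerivAt_of_hasDerivAt_zero
      (fun y hy => (hv₀ y hy).1.add (hv₁ y hy).1) hsum'' x hx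
  set k := √(r / D)
  have hk : 0 < k := sqrt_pos.mpr (div_pos hr hD)
  have hv₁'' : ∀ x ∈ Icc 0 L, deriv (deriv v₁) x = k ^ 2 * (v₁ x - (1 - ρ) * m * x) :=
    fun x hx => by
      rw [sq_sqrt (div_pos hr hD).le, div_mul_eq_mul_div, eq_div_iff hD.ne']
      subst hα hβ
      linear_combination hode1 x hx - (1 - ρ) * r * hsum x hx
  have hψL := mul_sinh_eq_mul_cosh_mul_of_hasDerivAt_sq_mul
    (ψ := fun x => v₁ x - (1 - ρ) * m * x) (ψ' := fun x => deriv v₁ x - (1 - ρ) * m)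
    (fun x hx => ((hv₁ x hx).1.sub ((hasDerivAt_id' x).const_mul ((1 - ρ) * m))).congr_deriv
      (by ring))
    (fun x hx => hv₁'' x hx ▸ (hv₁ x hx).2.sub_const ((1 - ρ) * m))
    (by simp [hbc1]) L hL_mem
  set T := sinh (k * L) / (k * cosh (k * L))
  have hT := sinh_div_mul_cosh_mem_Ioo hk hL
  have hv₁L : v₁ L = (1 - ρ) * m * (L - T) := by
    have hden : k * cosh (k * L) ≠ 0 := (mul_pos hk (cosh_pos _)).ne'
    have : v₁ L - (1 - ρ) * m * L = -((1 - ρ) * m) * T := by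
      rw [mul_div_assoc', eq_div_iff hden]
      linear_combination -hψL + sinh (k * L) * hbc2
    linarith
  set ℓ := ρ * L + (1 - ρ) * T
  have hℓ : ℓ ∈ Ioo (ρ * L) L := ⟨by nlinarith [hT.1], by nlinarith [hT.2]⟩
  have hflux : D * m = ρ * (D * c) / ℓ := by
    rw [eq_div_iff ((mul_pos hρ0 hL).trans hℓ.1).ne']
    linear_combination D * (hv₁L + hbc3 - hsum L hL_mem)
  rw [hflux, mul_assoc]
  exact mul_div_mem_Ioo_of_mem_Ioo_mul hρ0 (mul_pos hD hc) hL hℓ
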